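/- arXiv:0712.3018 — 3 statements merged into one kernel-verified Lean document; each statement's English description precedes it below -/
import Mathlib

section
/- Let I be a finite index set partitioned into three disjoint subsets L, D, R. Let M be a real symmetric positive-definite I × I matrix with M x y = 0 whenever one of x, y lies in L and the other in R. Then det M = det(M_LL) · det(N) · det(M_RR), where N = M_DD − M_DL (M_LL)⁻¹ M_LD − M_DR (M_RR)⁻¹ M_RD is the Neumann jump operator (the Schur complement of the (L ∪ R)-block). -/
/-!
Reordering `I` as `(L ⊕ R) ⊕ D` puts `M` in 2 × 2 block form whose `(L ∪ R)`-block is block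
diagonal, since `M` has no `L`–`R` entries; its diagonal blocks `M_LL` and `M_RR` are positive
definite, hence invertible. The Schur complement formula for the determinant applies, and
inverting the block diagonal matrix splits the Schur complement into the `L`- and
`R`-corrections that make up `N`.
-/

open Matrix

def finsetBlock {I : Type*} (M : Matrix I I ℝ) (S T : Finset I) : Matrix ↥S ↥T ℝ :=
  M.submatrix (fun i => (i : I)) (fun j => (j : I))

theorem Matrix.det_fromBlocks_fromBlocks_zero {l r d R : Type*} [Fintype l] [Fintype r]
    [Fintype d] [DecidableEq l] [DecidableEq r] [DecidableEq d] [CommRing R]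
    (A : Matrix l l R) (B : Matrix r r R) [Invertible A] [Invertible B]
    (P : Matrix l d R) (Q : Matrix r d R) (P' : Matrix d l R) (Q' : Matrix d r R)
    (C : Matrix d d R) :
    (fromBlocks (fromBlocks A 0 0 B) (fromRows P Q) (fromCols P' Q') C).det =
      A.det * (C - P' * A⁻¹ * P - Q' * B⁻¹ * Q).det * B.det := by
  let := fromBlocksZero₂₁Invertible A 0 B
  rw [det_fromBlocks₁₁, invOf_fromBlocks_zero₂₁_eq, det_fromBlocks_zero₂₁, Matrix.mul_zero,
    Matrix.zero_mul, neg_zero, fromCols_mul_fromBlocks]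
  simp only [Matrix.mul_zero, add_zero, zero_add]
  rw [fromCols_mul_fromRows, invOf_eq_nonsing_inv, invOf_eq_nonsing_inv, sub_add_eq_sub_sub]
  ring

section Partition

variable {I : Type*} [Fintype I] [DecidableEq I] {L D R : Finset I}

noncomputable def Finset.partitionEquiv (hLD : Disjoint L D) (hLR : Disjoint L R)
    (hDR : Disjoint D R) (hcover : L ∪ D ∪ R = Finset.univ) : (↥L ⊕ ↥R) ⊕ ↥D ≃ I :=
  Equiv.ofBijective (Sum.elim (Sum.elim (↑) (↑)) (↑)) ⟨
    (Subtype.val_injective.sumElim Subtype.val_injective fun a b =>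
      hLR.forall_ne_finset a.2 b.2).sumElim Subtype.val_injective <| by
        rintro (a | a) b
        exacts [hLD.forall_ne_finset a.2 b.2, hDR.symm.forall_ne_finset a.2 b.2],
    fun i => by
      have hi : i ∈ L ∪ D ∪ R := hcover ▸ Finset.mem_univ i
      simp only [Finset.mem_union] at hi
      rcases hi with (hi | hi) | hi
      exacts [⟨.inl (.inl ⟨i, hi⟩), rfl⟩, ⟨.inr ⟨i, hi⟩, rfl⟩, ⟨.inl (.inr ⟨i, hi⟩), rfl⟩]⟩

theorem Finset.submatrix_partitionEquiv (hLD : Disjoint L D) (hLR : Disjoint L R)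
    (hDR : Disjoint D R) (hcover : L ∪ D ∪ R = Finset.univ) (M : Matrix I I ℝ)
    (hzero : ∀ x y : I, (x ∈ L ∧ y ∈ R) ∨ (x ∈ R ∧ y ∈ L) → M x y = 0) :
    M.submatrix (partitionEquiv hLD hLR hDR hcover) (partitionEquiv hLD hLR hDR hcover) =
      fromBlocks (fromBlocks (finsetBlock M L L) 0 0 (finsetBlock M R R))
        (fromRows (finsetBlock M L D) (finsetBlock M R D))
        (fromCols (finsetBlock M D L) (finsetBlock M D R))
        (finsetBlock M D D) := by
  ext ((a | a) | a) ((b | b) | b)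
  all_goals first
    | rfl
    | exact hzero _ _ (.inl ⟨a.2, b.2⟩)
    | exact hzero _ _ (.inr ⟨a.2, b.2⟩)

end Partition

/-- If `I` is partitioned into `L ⊔ D ⊔ R` and the symmetric positive definite matrix `M`
has no entries linking `L` and `R`, then `det M = det M_LL ⬝ det N ⬝ det M_RR`, where `N`
is the Neumann jump operator (Schur complement of the `(L ∪ R)`-block). -/
theorem stmt_0 {I : Type*} [Fintype I] [DecidableEq I]
    (L D R : Finset I)
    (hLD : Disjoint L D) (hLR : Disjoint L R) (hDR : Disjoint D R)
    (hcover : L ∪ D ∪ R = Finset.univ)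
    (M : Matrix I I ℝ) (hM : M.PosDef)
    (hzero : ∀ x y : I, (x ∈ L ∧ y ∈ R) ∨ (x ∈ R ∧ y ∈ L) → M x y = 0) :
    M.det =
      (finsetBlock M L L).det *
        (finsetBlock M D D
          - finsetBlock M D L * (finsetBlock M L L)⁻¹ * finsetBlock M L D
          - finsetBlock M D R * (finsetBlock M R R)⁻¹ * finsetBlock M R D).det *
      (finsetBlock M R R).det := by
  let : Invertible (finsetBlock M L L) :=
    (hM.submatrix Subtype.val_injective).isUnit.invertible
  let : Invertible (finsetBlock M R R) :=
    (hM.submatrix Subtype.val_injective).isUnit.invertible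
  rw [← det_submatrix_equiv_self (Finset.partitionEquiv hLD hLR hDR hcover),
    Finset.submatrix_partitionEquiv hLD hLR hDR hcover M hzero,
    det_fromBlocks_fromBlocks_zero]
end

section
/- Let φ_∂ : ∂ → ℝ and let m : V → ℝ be harmonic on V° (i.e. (Δm)(x) = 0 for all x ∈ V°) with m restricted to ∂ equal to φ_∂. Then ∫_{ℝ^{V°}} exp(−½ ⟨φ ∪ φ_∂, φ ∪ φ_∂⟩) ∏_{x ∈ V°} dφ(x)/√(2π) = det(Δ°)^{−1/2} · exp(−½ ⟨m, m⟩), where φ ∪ φ_∂ : V → ℝ denotes the function equal to φ on V° and to φ_∂ on ∂. (This identifies the partition function of the discrete free field with boundary condition φ_∂.) -/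
open MeasureTheory Finset

/-- Dirichlet energy `⟨f, f⟩ = Σ_{{x,y} ∈ E} (f(x) − f(y))²` of a function on the vertices of
a finite simple graph (each unordered edge counted once). -/
noncomputable def dirichletEnergy {V : Type*} [Fintype V] (G : SimpleGraph V) [DecidableRel G.Adj]
    (f : V → ℝ) : ℝ :=
  (1 / 2) * ∑ x : V, ∑ y : V, if G.Adj x y then (f x - f y) ^ 2 else 0

/-- The Dirichlet combinatorial Laplacian `Δ°` on the interior `V° = V ∖ ∂`:
`(Δ°)_{xy} = deg x` if `x = y`, `−1` if `x ∼ y`, and `0` otherwise. -/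
noncomputable def dirichletLaplacian {V : Type*} [Fintype V] [DecidableEq V] (G : SimpleGraph V)
    [DecidableRel G.Adj] (bd : Finset V) : Matrix ↥bdᶜ ↥bdᶜ ℝ :=
  fun x y => if (x : V) = (y : V) then (G.degree (x : V) : ℝ)
    else if G.Adj (x : V) (y : V) then -1 else 0

/-! Write the glued configuration as `φ ∪ φ_∂ = m + g` with `g` vanishing on `∂`. Since `m` is
harmonic off `∂`, the cross term `g ⬝ᵥ L m` of the graph Laplacian `L` vanishes, so the energy
splits as `⟨m, m⟩ + g° ⬝ᵥ Δ° g°` with `g° = φ - m|_{V°}`. After translating by `m|_{V°}`, what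
is left is the Gaussian integral of `Δ°`, computed by the substitution `y = √Δ° x`. -/

open Matrix
open scoped MatrixOrder

section Gaussian

variable {ι : Type*} [Fintype ι]

theorem integral_exp_neg_half_dotProduct_self :
    ∫ x : ι → ℝ, Real.exp (-(1 / 2) * (x ⬝ᵥ x)) = Real.sqrt ((2 * Real.pi) ^ Fintype.card ι) := by
  have hprod (x : ι → ℝ) :
      Real.exp (-(1 / 2) * (x ⬝ᵥ x)) = ∏ i, Real.exp (-(1 / 2) * x i ^ 2) := by
    simp only [← Real.exp_sum, dotProduct, mul_sum, sq]
  have hsqrt : Real.sqrt ((2 * Real.pi) ^ Fintype.card ι)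
      = Real.sqrt (2 * Real.pi) ^ Fintype.card ι := by
    simpa using Real.sqrt_prod (range (Fintype.card ι)) fun _ _ => Real.two_pi_pos.le
  simp_rw [hprod]
  rw [integral_fintype_prod_volume_eq_pow (fun t : ℝ => Real.exp (-(1 / 2) * t ^ 2)),
    integral_gaussian, hsqrt]
  congr 2
  field_simp

variable [DecidableEq ι]

theorem integral_comp_mulVec {E : Type*} [NormedAddCommGroup E] [NormedSpace ℝ E]
    (f : (ι → ℝ) → E) {S : Matrix ι ι ℝ} (hS : S.det ≠ 0) :
    ∫ x, f (S *ᵥ x) = |S.det|⁻¹ • ∫ y, f y := by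
  have hS' : LinearMap.det (toLin' S) ≠ 0 := by rwa [LinearMap.det_toLin']
  let e := ((toLin' S).equivOfDetNeZero hS').toContinuousLinearEquiv.toHomeomorph.toMeasurableEquiv
  have hmap : Measure.map e volume = ENNReal.ofReal |S.det|⁻¹ • volume := by
    rw [show ⇑e = ⇑(toLin' S) from rfl]
    simpa [LinearMap.det_toLin'] using
      Measure.map_linearMap_addHaar_eq_smul_addHaar (μ := (volume : Measure (ι → ℝ))) hS'
  have := integral_map_equiv e f (μ := volume)
  rw [hmap, integral_smul_measure, ENNReal.toReal_ofReal (by positivity)] at this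
  exact this.symm

theorem integral_exp_neg_half_dotProduct_mulVec {A : Matrix ι ι ℝ} (hA : A.PosDef) :
    ∫ x : ι → ℝ, Real.exp (-(1 / 2) * (x ⬝ᵥ A *ᵥ x))
      = Real.sqrt ((2 * Real.pi) ^ Fintype.card ι) * (Real.sqrt A.det)⁻¹ := by
  set S := CFC.sqrt A
  have hSdet : S.det = Real.sqrt A.det := by
    rw [hA.posSemidef.det_sqrt, RCLike.sqrt_real]
  have hquad (x : ι → ℝ) : x ⬝ᵥ A *ᵥ x = (S *ᵥ x) ⬝ᵥ (S *ᵥ x) := by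
    have hSymm : Sᵀ = S := by
      simpa [conjTranspose_eq_transpose_of_trivial] using (CFC.sqrt_nonneg A).posSemidef.1.eq
    rw [← CFC.sqrt_mul_sqrt_self A hA.posSemidef.nonneg, ← mulVec_mulVec, dotProduct_mulVec,
      ← mulVec_transpose, hSymm]
  simp_rw [hquad]
  rw [integral_comp_mulVec (fun y => Real.exp (-(1 / 2) * (y ⬝ᵥ y)))
      (hSdet ▸ Real.sqrt_ne_zero'.mpr hA.det_pos),
    integral_exp_neg_half_dotProduct_self, hSdet, abs_of_nonneg (Real.sqrt_nonneg _),
    smul_eq_mul, mul_comm]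

end Gaussian

section QuadraticForm

variable {n R : Type*} [Fintype n] [CommSemiring R]

theorem dotProduct_mulVec_add_of_isSymm {L : Matrix n n R} (hL : L.IsSymm) {m g : n → R}
    (h : g ⬝ᵥ L *ᵥ m = 0) :
    (m + g) ⬝ᵥ L *ᵥ (m + g) = m ⬝ᵥ L *ᵥ m + g ⬝ᵥ L *ᵥ g := by
  have h' : m ⬝ᵥ L *ᵥ g = 0 := by
    rw [dotProduct_mulVec, ← mulVec_transpose, hL.eq, dotProduct_comm, h]
  simp only [mulVec_add, add_dotProduct, dotProduct_add, h, h', add_zero, zero_add]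

theorem sum_coe_sort_eq_sum_univ {M : Type*} [AddCommMonoid M] (s : Finset n) (f : n → M)
    (hf : ∀ x ∉ s, f x = 0) : ∑ x : s, f x = ∑ x, f x :=
  (sum_coe_sort s f).trans (sum_subset (subset_univ s) fun x _ hx => hf x hx)

theorem dotProduct_mulVec_submatrix_coe (L : Matrix n n R) (s : Finset n) {g : n → R}
    (hg : ∀ x ∉ s, g x = 0) :
    (fun x : s => g x) ⬝ᵥ L.submatrix (↑) (↑) *ᵥ (fun x : s => g x) = g ⬝ᵥ L *ᵥ g := by
  have hrow (x : n) : ∑ y : s, L x y * g y = ∑ y, L x y * g y :=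
    sum_coe_sort_eq_sum_univ s (fun y => L x y * g y) fun y hy => by rw [hg y hy, mul_zero]
  simp only [dotProduct, mulVec, submatrix_apply, hrow]
  exact sum_coe_sort_eq_sum_univ s (fun x => g x * ∑ y, L x y * g y)
    fun x hx => by rw [hg x hx, zero_mul]

end QuadraticForm

section Graph

variable {V : Type*} [Fintype V] [DecidableEq V] (G : SimpleGraph V) [DecidableRel G.Adj]

theorem SimpleGraph.lapMatrix_mulVec_apply_eq_sum_adj {R : Type*} [CommRing R] (f : V → R)
    (x : V) : (G.lapMatrix R *ᵥ f) x = ∑ y, if G.Adj x y then f x - f y else 0 := by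
  rw [G.lapMatrix_mulVec_apply, ← sum_filter, sum_sub_distrib, sum_const,
    ← G.neighborFinset_eq_filter, G.card_neighborFinset_eq_degree, nsmul_eq_mul]

theorem dirichletEnergy_eq_dotProduct_lapMatrix (f : V → ℝ) :
    dirichletEnergy G f = f ⬝ᵥ G.lapMatrix ℝ *ᵥ f := by
  rw [dirichletEnergy, ← toLinearMap₂'_apply', G.lapMatrix_toLinearMap₂' ℝ]
  ring

theorem dirichletLaplacian_eq_submatrix (bd : Finset V) :
    dirichletLaplacian G bd = (G.lapMatrix ℝ).submatrix (↑) (↑) := by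
  ext x y
  by_cases hxy : (x : V) = y
  · obtain rfl := Subtype.ext hxy
    simp [dirichletLaplacian, SimpleGraph.lapMatrix, SimpleGraph.degMatrix]
  · by_cases hadj : G.Adj x y <;>
      simp [dirichletLaplacian, SimpleGraph.lapMatrix, SimpleGraph.degMatrix, hxy, hadj]

theorem dirichletEnergy_add_of_lapMatrix_mulVec_eq_zero (bd : Finset V) {m g : V → ℝ}
    (hharm : ∀ x ∉ bd, (G.lapMatrix ℝ *ᵥ m) x = 0) (hg : ∀ x ∈ bd, g x = 0) :
    dirichletEnergy G (m + g) = dirichletEnergy G m +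
      (fun x : ↥bdᶜ => g x) ⬝ᵥ dirichletLaplacian G bd *ᵥ (fun x : ↥bdᶜ => g x) := by
  have hcross : g ⬝ᵥ G.lapMatrix ℝ *ᵥ m = 0 := sum_eq_zero fun x _ => by
    by_cases hx : x ∈ bd
    · rw [hg x hx, zero_mul]
    · rw [hharm x hx, mul_zero]
  rw [dirichletEnergy_eq_dotProduct_lapMatrix, dirichletEnergy_eq_dotProduct_lapMatrix,
    dotProduct_mulVec_add_of_isSymm (G.isSymm_lapMatrix ℝ) hcross,
    dirichletLaplacian_eq_submatrix,
    dotProduct_mulVec_submatrix_coe _ _ fun x hx => hg x (by simpa using hx)]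

end Graph

theorem stmt_1_general {V : Type*} [Fintype V] [DecidableEq V] (G : SimpleGraph V)
    [DecidableRel G.Adj] (bd : Finset V)
    (hPD : (dirichletLaplacian G bd).PosDef)
    (φb : ↥bd → ℝ) (m : V → ℝ)
    (hmb : ∀ x : ↥bd, m (x : V) = φb x)
    (hharm : ∀ x : V, x ∉ bd → (∑ y : V, if G.Adj x y then m x - m y else 0) = 0) :
    (∫ φ : ↥bdᶜ → ℝ,
        Real.exp (-(1 / 2) * dirichletEnergy G (fun x : V =>
          if h : x ∈ bd then φb ⟨x, h⟩ else φ ⟨x, Finset.mem_compl.mpr h⟩)))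
      = Real.sqrt ((2 * Real.pi) ^ Fintype.card ↥bdᶜ) *
          ((Real.sqrt (dirichletLaplacian G bd).det)⁻¹ *
            Real.exp (-(1 / 2) * dirichletEnergy G m)) := by
  set A := dirichletLaplacian G bd
  set mInt : ↥bdᶜ → ℝ := fun x => m x
  set glue : (↥bdᶜ → ℝ) → V → ℝ := fun φ x =>
    if h : x ∈ bd then φb ⟨x, h⟩ else φ ⟨x, Finset.mem_compl.mpr h⟩
  have hsplit (φ : ↥bdᶜ → ℝ) :
      dirichletEnergy G (glue φ) = dirichletEnergy G m + (φ - mInt) ⬝ᵥ A *ᵥ (φ - mInt) := by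
    have hinterior : (fun x : ↥bdᶜ => (glue φ - m) x) = φ - mInt := by
      ext x
      simp [glue, mInt, Finset.mem_compl.mp x.2]
    have := dirichletEnergy_add_of_lapMatrix_mulVec_eq_zero G bd (g := glue φ - m)
      (fun x hx => (G.lapMatrix_mulVec_apply_eq_sum_adj m x).trans (hharm x hx))
      (fun x hx => by simp only [glue, Pi.sub_apply, dif_pos hx, hmb ⟨x, hx⟩, sub_self])
    rwa [add_sub_cancel, hinterior] at this
  show ∫ φ, Real.exp (-(1 / 2) * dirichletEnergy G (glue φ)) = _
  simp_rw [hsplit, mul_add, Real.exp_add]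
  rw [integral_const_mul,
    integral_sub_right_eq_self (fun φ => Real.exp (-(1 / 2) * (φ ⬝ᵥ A *ᵥ φ))) mInt,
    integral_exp_neg_half_dotProduct_mulVec hPD]
  ring

/-- Partition function of the discrete free field with boundary condition `φ_∂`:
if `m` is the harmonic extension of `φ_∂`, then
`∫ exp(−½⟨φ ∪ φ_∂, φ ∪ φ_∂⟩) ∏_{x ∈ V°} dφ(x)/√(2π) = det(Δ°)^{−1/2} exp(−½⟨m, m⟩)`. -/
theorem stmt_1 {V : Type*} [Fintype V] [DecidableEq V] (G : SimpleGraph V)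
    [DecidableRel G.Adj] (bd : Finset V) (hbd : bd.Nonempty)
    (hPD : (dirichletLaplacian G bd).PosDef)
    (φb : ↥bd → ℝ) (m : V → ℝ)
    (hmb : ∀ x : ↥bd, m (x : V) = φb x)
    (hharm : ∀ x : V, x ∉ bd → (∑ y : V, if G.Adj x y then m x - m y else 0) = 0) :
    (∫ φ : ↥bdᶜ → ℝ,
        Real.exp (-(1 / 2) * dirichletEnergy G (fun x : V =>
          if h : x ∈ bd then φb ⟨x, h⟩ else φ ⟨x, Finset.mem_compl.mpr h⟩)))
      = Real.sqrt ((2 * Real.pi) ^ Fintype.card ↥bdᶜ) *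
          ((Real.sqrt (dirichletLaplacian G bd).det)⁻¹ *
            Real.exp (-(1 / 2) * dirichletEnergy G m)) :=
  stmt_1_general G bd hPD φb m hmb hharm
end

section
/- Let x ∈ ℝ and let z, z′ ∈ ℍ = {w ∈ ℂ : Im w > 0} with z ≠ z′. Let a, b be ℍ-valued functions of t ∈ [0, T) with a(0) = z, b(0) = z′, such that a has derivative 2/(z − x) at t = 0 and b has derivative 2/(z′ − x) at t = 0 (the chordal Loewner equation with driving point x at time 0). Define G(w, w′) = −(1/2π) log| (w − w′)/(w − conj(w′)) | and P(w) = −(1/π) Im(1/(w − x)). Then t ↦ G(a(t), b(t)) is differentiable at t = 0 with derivative equal to −2π · P(z) · P(z′). -/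
open Complex ComplexConjugate Real
open scoped RealInnerProductSpace

/-!
Since `log‖f‖` has derivative `Re (f'/f)`, the derivative of `G(a, b)` is `-(1/2π)` times the real
part of the difference of the logarithmic derivatives of `a - b` and `a - conj b`. Under the Loewner
flow each of these difference quotients collapses,
`(2/(w - x) - 2/(w' - x)) / (w - w') = -2 (w - x)⁻¹ (w' - x)⁻¹`, and with `u = (z - x)⁻¹`,
`v = (z' - x)⁻¹` what remains is `(1/π) Re (u (v - conj v)) = -(2/π) Im u Im v`, which is
`-2π P(z) P(z')`.
-/

noncomputable def uhpGreen (w w' : ℂ) : ℝ :=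
  -(1 / (2 * π)) * Real.log ‖(w - w') / (w - conj w')‖

noncomputable def uhpPoisson (x : ℝ) (w : ℂ) : ℝ :=
  -(1 / π) * (1 / (w - x)).im

theorem HasDerivWithinAt.log_norm {F : Type*} [NormedAddCommGroup F] [InnerProductSpace ℝ F]
    {f : ℝ → F} {f' : F} {s : Set ℝ} {t : ℝ} (hf : HasDerivWithinAt f f' s t) (ht : f t ≠ 0) :
    HasDerivWithinAt (fun u => Real.log ‖f u‖) (⟪f t, f'⟫ / ‖f t‖ ^ 2) s t := by
  have hsq := (hf.norm_sq.log (by positivity)).const_mul (2⁻¹ : ℝ)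
  simp only [Real.log_pow, Nat.cast_ofNat, ← mul_assoc, mul_div_assoc,
    inv_mul_cancel₀ (two_ne_zero (α := ℝ)), one_mul] at hsq
  exact hsq

theorem Complex.real_inner_div_norm_sq (w d : ℂ) : ⟪w, d⟫ / ‖w‖ ^ 2 = (d / w).re := by
  rw [Complex.inner, Complex.div_re, ← Complex.normSq_eq_norm_sq]
  simp only [conj_re, conj_im, mul_re]
  ring

theorem HasDerivWithinAt.complex_log_norm {f : ℝ → ℂ} {f' : ℂ} {s : Set ℝ} {t : ℝ}
    (hf : HasDerivWithinAt f f' s t) (ht : f t ≠ 0) :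
    HasDerivWithinAt (fun u => Real.log ‖f u‖) (f' / f t).re s t := by
  simpa only [Complex.real_inner_div_norm_sq] using hf.log_norm ht

theorem HasDerivWithinAt.uhpGreen {a b : ℝ → ℂ} {a' b' : ℂ} {s : Set ℝ} {t : ℝ}
    (ha : HasDerivWithinAt a a' s t) (hb : HasDerivWithinAt b b' s t)
    (hab : a t - b t ≠ 0) (hab' : a t - conj (b t) ≠ 0) :
    HasDerivWithinAt (fun u => uhpGreen (a u) (b u))
      (-(1 / (2 * π)) * ((a' - b') / (a t - b t) - (a' - conj b') / (a t - conj (b t))).re)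
      s t := by
  have hb' : HasDerivWithinAt (fun u => conj (b u)) (conj b') s t := hb.star
  have hquot : HasDerivWithinAt (fun u => (a u - b u) / (a u - conj (b u)))
      (((a' - b') * (a t - conj (b t)) - (a t - b t) * (a' - conj b')) / (a t - conj (b t)) ^ 2)
      s t :=
    (ha.sub hb).div (ha.sub hb') hab'
  have hlogDeriv : ((a' - b') * (a t - conj (b t)) - (a t - b t) * (a' - conj b')) /
      (a t - conj (b t)) ^ 2 / ((a t - b t) / (a t - conj (b t))) =
      (a' - b') / (a t - b t) - (a' - conj b') / (a t - conj (b t)) := by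
    field_simp
  have hG := (hquot.complex_log_norm (div_ne_zero hab hab')).const_mul (-(1 / (2 * π)))
  rwa [hlogDeriv] at hG

theorem div_sub_div_div_sub {K : Type*} [Field K] (c x w w' : K)
    (hw : w - x ≠ 0) (hw' : w' - x ≠ 0) (hne : w - w' ≠ 0) :
    (c / (w - x) - c / (w' - x)) / (w - w') = -c * ((w - x)⁻¹ * (w' - x)⁻¹) := by
  field_simp
  ring

theorem Complex.re_mul_sub_conj (u v : ℂ) : (u * (v - conj v)).re = -2 * u.im * v.im := by
  rw [sub_conj, mul_re]
  simp only [mul_re, mul_im, ofReal_re, ofReal_im, I_re, I_im]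
  ring

theorem neg_two_pi_mul_uhpPoisson_mul_uhpPoisson (x : ℝ) (z z' : ℂ) :
    -2 * π * uhpPoisson x z * uhpPoisson x z' =
      -(1 / (2 * π)) * (-2 * ((z - x)⁻¹ * (z' - x)⁻¹) - -2 * ((z - x)⁻¹ * (conj z' - x)⁻¹)).re := by
  have hconj : (conj z' - x)⁻¹ = conj (z' - x)⁻¹ := by rw [map_inv₀, map_sub, conj_ofReal]
  have hsplit : -2 * ((z - x)⁻¹ * (z' - x)⁻¹) - -2 * ((z - x)⁻¹ * conj (z' - x)⁻¹) =
      ((-2 : ℝ) : ℂ) * ((z - x)⁻¹ * ((z' - x)⁻¹ - conj (z' - x)⁻¹)) := by push_cast; ring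
  rw [hconj, hsplit, re_ofReal_mul, re_mul_sub_conj, uhpPoisson, uhpPoisson, one_div, one_div]
  field_simp

theorem stmt_13_general (x : ℝ) (z z' : ℂ) (hz : 0 < z.im) (hz' : 0 < z'.im) (hne : z ≠ z')
    (T : ℝ) (a b : ℝ → ℂ)
    (ha0 : a 0 = z) (hb0 : b 0 = z')
    (ha : HasDerivWithinAt a (2 / (z - (x : ℂ))) (Set.Ico 0 T) 0)
    (hb : HasDerivWithinAt b (2 / (z' - (x : ℂ))) (Set.Ico 0 T) 0) :
    HasDerivWithinAt
      (fun t => -(1 / (2 * Real.pi)) *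
        Real.log ‖(a t - b t) / (a t - (starRingEnd ℂ) (b t))‖)
      (-2 * Real.pi * (-(1 / Real.pi) * (1 / (z - (x : ℂ))).im) *
        (-(1 / Real.pi) * (1 / (z' - (x : ℂ))).im))
      (Set.Ico 0 T) 0 := by
  have hzx : z - x ≠ 0 := sub_ne_zero.2 fun h => by simp [h] at hz
  have hzx' : z' - x ≠ 0 := sub_ne_zero.2 fun h => by simp [h] at hz'
  have hzx'c : conj z' - x ≠ 0 := sub_ne_zero.2 fun h => by
    have := congrArg im h; simp at this; linarith
  have hzz'c : z - conj z' ≠ 0 := sub_ne_zero.2 fun h => by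
    have := congrArg im h; simp at this; linarith
  have hconj : conj (2 / (z' - x)) = 2 / (conj z' - x) := by
    rw [map_div₀, map_sub, conj_ofReal, map_ofNat]
  have hG := ha.uhpGreen hb (by rwa [ha0, hb0, sub_ne_zero]) (by rwa [ha0, hb0])
  rw [ha0, hb0, hconj, div_sub_div_div_sub 2 (x : ℂ) z z' hzx hzx' (sub_ne_zero.2 hne),
    div_sub_div_div_sub 2 (x : ℂ) z (conj z') hzx hzx'c hzz'c,
    ← neg_two_pi_mul_uhpPoisson_mul_uhpPoisson] at hG
  exact hG

/-- Variation of the Green function of the upper half-plane under growth of an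
infinitesimal hull at the boundary point `x`: if `a, b` are `ℍ`-valued on `[0, T)` with
`a(0) = z`, `b(0) = z′` and one-sided derivatives `2/(z − x)`, `2/(z′ − x)` at `t = 0`
(the chordal Loewner equation), then `t ↦ G(a(t), b(t))` has one-sided derivative
`−2π P(z) P(z′)` at `t = 0`, where `G(w,w′) = −(1/2π) log|(w − w′)/(w − conj w′)|` and
`P(w) = −(1/π) Im(1/(w − x))`. -/
theorem stmt_13 (x : ℝ) (z z' : ℂ) (hz : 0 < z.im) (hz' : 0 < z'.im) (hne : z ≠ z')
    (T : ℝ) (hT : 0 < T) (a b : ℝ → ℂ)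
    (ha0 : a 0 = z) (hb0 : b 0 = z')
    (haH : ∀ t ∈ Set.Ico (0:ℝ) T, 0 < (a t).im)
    (hbH : ∀ t ∈ Set.Ico (0:ℝ) T, 0 < (b t).im)
    (ha : HasDerivWithinAt a (2 / (z - (x : ℂ))) (Set.Ico 0 T) 0)
    (hb : HasDerivWithinAt b (2 / (z' - (x : ℂ))) (Set.Ico 0 T) 0) :
    HasDerivWithinAt
      (fun t => -(1 / (2 * Real.pi)) *
        Real.log ‖(a t - b t) / (a t - (starRingEnd ℂ) (b t))‖)
      (-2 * Real.pi * (-(1 / Real.pi) * (1 / (z - (x : ℂ))).im) *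
        (-(1 / Real.pi) * (1 / (z' - (x : ℂ))).im))
      (Set.Ico 0 T) 0 :=
  stmt_13_general x z z' hz hz' hne T a b ha0 hb0 ha hb
end
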